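/- arXiv:0908.4071 — 6 statements merged into one kernel-verified Lean document; each statement's English description precedes it below -/
import Mathlib

section
/- If an m-by-s integer matrix U is weakly unimodular (every maximal square, i.e. s-by-s, submatrix has determinant in {-1,0,1}) and contains the s-by-s identity matrix as a submatrix (on some set of s rows), then U is totally unimodular. -/
/-- An integer matrix is totally unimodular if every square submatrix has
determinant in `{-1, 0, 1}`. -/
def IsTU {m n : Type*} [Fintype m] [Fintype n] (M : Matrix m n ℤ) : Prop :=
  ∀ (k : ℕ) (f : Fin k → m) (g : Fin k → n),
    (M.submatrix f g).det ∈ ({-1, 0, 1} : Set ℤ)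

/-!
A `k × k` submatrix of `U` with distinct columns `cols` and rows `rows` is completed to an
`s × s` submatrix by taking, for every column `j` outside `cols`, the row of `U` that is the
`j`-th unit vector. Ordering the columns of `cols` first, the completed matrix is block upper
triangular with an identity block in the lower right corner, so it has the same determinant as
the original submatrix. Submatrices with a repeated column have determinant `0`.
-/

open Function Matrix

namespace Matrix

variable {R : Type*} [CommRing R] {m n ι : Type*} [Fintype n] [DecidableEq n]
  [Fintype ι] [DecidableEq ι]

theorem det_submatrix_extend_eq_det_submatrix {A : Matrix m n R} {f : n → m}
    (hf : A.submatrix f id = 1) (rows : ι → m) {cols : ι → n} (hcols : Injective cols) :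
    (A.submatrix (extend cols rows f) id).det = (A.submatrix rows cols).det := by
  set M := A.submatrix (extend cols rows f) id
  have hM_unit : ∀ i, i ∉ Set.range cols → ∀ j, M i j = (1 : Matrix n n R) i j := by
    intro i hi j
    simp only [M, submatrix_apply, id, extend_apply' rows f i (by simpa using hi)]
    exact congrFun (congrFun hf i) j
  have hM_lower : ∀ i, i ∉ Set.range cols → ∀ j, j ∈ Set.range cols → M i j = 0 := by
    intro i hi j hj
    rw [hM_unit i hi j, one_apply_ne]
    rintro rfl
    exact hi hj
  have hM_block : toSquareBlockProp M (fun j => j ∉ Set.range cols) = 1 := by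
    ext ⟨i, hi⟩ ⟨j, _⟩
    simp only [toSquareBlockProp_def, of_apply, hM_unit i hi j, one_apply, Subtype.mk.injEq]
  have hM_top : (toSquareBlockProp M (fun j => j ∈ Set.range cols)).submatrix
      (Equiv.ofInjective cols hcols) (Equiv.ofInjective cols hcols) = A.submatrix rows cols := by
    ext i j
    simp [M, toSquareBlockProp_def, hcols.extend_apply]
  rw [twoBlockTriangular_det M (fun j => j ∈ Set.range cols) hM_lower, hM_block, det_one,
    mul_one, ← hM_top, det_submatrix_equiv_self]
  -- the two sides carry different `Fintype` instances on `Set.range cols`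
  convert rfl

end Matrix

/-- If an `m×s` integer matrix is weakly unimodular (every `s×s` submatrix has
determinant in `{-1,0,1}`) and contains `I_s` as a submatrix, then it is TU. -/
theorem stmt0 {m s : ℕ} (U : Matrix (Fin m) (Fin s) ℤ)
    (hWU : ∀ f : Fin s → Fin m, (U.submatrix f id).det ∈ ({-1, 0, 1} : Set ℤ))
    (hI : ∃ f : Fin s → Fin m, Function.Injective f ∧ U.submatrix f id = 1) :
    IsTU U := by
  obtain ⟨f, -, hf⟩ := hI
  intro k rows cols
  by_cases hcols : Injective cols
  · rw [← det_submatrix_extend_eq_det_submatrix hf rows hcols]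
    exact hWU _
  · obtain ⟨i, j, hij, hne⟩ := not_injective_iff.mp hcols
    rw [det_zero_of_column_eq hne fun a => by simp [hij]]
    simp
end

section
/- Let M be a totally unimodular matrix and β a nonzero integer vector in the kernel of M whose support is a circuit of the column matroid of M. Then all nonzero coordinates of β have the same absolute value. -/
/-- A set of columns of `M` is dependent if the columns are linearly dependent over `ℚ`. -/
def ColDep {m n : Type*} [Fintype m] (M : Matrix m n ℤ) (C : Set n) : Prop :=
  ¬ LinearIndependent ℚ (fun j : C => fun i => (M i j : ℚ))

/-- A circuit of the column matroid of `M` is a minimal dependent set of columns. -/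
def IsCircuit {m n : Type*} [Fintype m] (M : Matrix m n ℤ) (C : Set n) : Prop :=
  ColDep M C ∧ ∀ C' ⊂ C, ¬ ColDep M C'

/-- A simple flow of `M` is a nonzero integer vector in `ker M` with entries in
`{-1,0,1}` whose support is a circuit of the column matroid of `M`. -/
def IsSimpleFlow {m n : Type*} [Fintype m] [Fintype n] (M : Matrix m n ℤ) (α : n → ℤ) : Prop :=
  α ≠ 0 ∧ M.mulVec α = 0 ∧ (∀ e, α e = -1 ∨ α e = 0 ∨ α e = 1) ∧
    IsCircuit M {e | α e ≠ 0}

namespace Matrix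

theorem exists_submatrix_det_ne_zero_of_linearIndependent_col {K m n : Type*} [Field K]
    [Fintype m] [Fintype n] [DecidableEq n] {A : Matrix m n K} (hA : LinearIndependent K A.col) :
    ∃ ρ : n → m, (A.submatrix ρ id).det ≠ 0 := by
  have hspan : Submodule.span K (Set.range A.row) = ⊤ := by
    apply Submodule.eq_top_of_finrank_eq
    have hAt : LinearIndependent K Aᵀ.row := hA
    rw [← rank_eq_finrank_span_row, ← rank_transpose, hAt.rank_matrix,
      Module.finrank_fintype_fun_eq_card]
  obtain ⟨κ, a, -, hspan_a, hli⟩ := exists_linearIndependent' K A.row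
  rw [hspan] at hspan_a
  let b : Module.Basis κ K (n → K) := .mk hli hspan_a.ge
  let e : n ≃ κ := (Pi.basisFun K n).indexEquiv b
  refine ⟨a ∘ e, fun h => ?_⟩
  have hrows : LinearIndependent K (A.submatrix (a ∘ e) id).row := hli.comp e e.injective
  exact (isUnit_iff_isUnit_det _ |>.mp (linearIndependent_rows_iff_isUnit.mp hrows)).ne_zero h

theorem cramer_mulVec {n α : Type*} [Fintype n] [DecidableEq n] [CommRing α]
    (A : Matrix n n α) (x : n → α) : A.cramer (A *ᵥ x) = A.det • x := by
  rw [cramer_eq_adjugate_mulVec, mulVec_mulVec, adjugate_mul, smul_mulVec, one_mulVec]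

end Matrix

open Matrix

namespace IsTU

variable {m n ι : Type*} [Fintype m] [Fintype n] [Fintype ι] [DecidableEq ι] {M : Matrix m n ℤ}

theorem det_submatrix_mem (hM : IsTU M) (f : ι → m) (g : ι → n) :
    (M.submatrix f g).det ∈ ({-1, 0, 1} : Set ℤ) := by
  let σ := Fintype.equivFin ι
  have h := hM _ (f ∘ σ.symm) (g ∘ σ.symm)
  rwa [← submatrix_submatrix, det_submatrix_equiv_self] at h

theorem exists_abs_det_submatrix_eq_one (hM : IsTU M) {g : ι → n}
    (hg : LinearIndependent ℚ fun q i => (M i (g q) : ℚ)) :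
    ∃ ρ : ι → m, |(M.submatrix ρ g).det| = 1 := by
  obtain ⟨ρ, hρ⟩ := exists_submatrix_det_ne_zero_of_linearIndependent_col
    (A := (M.map (Int.cast : ℤ → ℚ)).submatrix id g) hg
  refine ⟨ρ, ?_⟩
  have hdet : (M.submatrix ρ g).det ≠ 0 := by
    rw [submatrix_submatrix, Function.id_comp, Function.comp_id, submatrix_map,
      ← Int.cast_det] at hρ
    exact_mod_cast hρ
  rcases hM.det_submatrix_mem ρ g with h | h | h <;> simp_all

theorem eq_zero_or_abs_eq_of_mulVec_eq [DecidableEq n] (hM : IsTU M) {g : ι → n}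
    (hg : LinearIndependent ℚ fun q i => (M i (g q) : ℚ)) {x : ι → ℤ} {c : ℤ} {e : n}
    (hx : M.submatrix id g *ᵥ x = c • M.col e) (p : ι) :
    x p = 0 ∨ |x p| = |c| := by
  obtain ⟨ρ, hρ⟩ := hM.exists_abs_det_submatrix_eq_one hg
  set B := M.submatrix ρ g
  have hBx : B *ᵥ x = c • fun q => M (ρ q) e := funext fun q => congrFun hx (ρ q)
  have hcol : B.updateCol p (fun q => M (ρ q) e) = M.submatrix ρ (Function.update g p e) := by
    ext i j
    by_cases hj : j = p <;> simp [B, hj]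
  have hcramer : B.det * x p = c * (M.submatrix ρ (Function.update g p e)).det := by
    rw [← smul_eq_mul, ← Pi.smul_apply, ← cramer_mulVec, hBx, cramer_apply, det_updateCol_smul,
      hcol]
  have habs : |x p| = |c| * |(M.submatrix ρ (Function.update g p e)).det| := by
    rw [← abs_mul, ← hcramer, abs_mul, hρ, one_mul]
  rcases hM.det_submatrix_mem ρ (Function.update g p e) with h | h | h <;> simp_all

end IsTU

theorem stmt2_general {r m : ℕ} (M : Matrix (Fin r) (Fin m) ℤ) (hTU : IsTU M)
    (β : Fin m → ℤ) (hker : M.mulVec β = 0)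
    (hC : IsCircuit M {e | β e ≠ 0}) :
    ∀ e f : Fin m, β e ≠ 0 → β f ≠ 0 → |β e| = |β f| := by
  intro e f he hf
  obtain rfl | hfe := eq_or_ne f e
  · rfl
  set S := (Finset.univ.filter (β · ≠ 0)).erase e
  have hS : (S : Set (Fin m)) ⊂ {j | β j ≠ 0} := by
    simpa [S] using Set.sdiff_singleton_ssubset.2 (show e ∈ {j | β j ≠ 0} from he)
  have hind : LinearIndependent ℚ fun (j : S) i => (M i j : ℚ) := not_not.1 (hC.2 _ hS)
  have hcomb : M.submatrix id (↑) *ᵥ (fun j : S => β j) = (-β e) • M.col e := by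
    ext i
    have h0 : ∑ j, M i j * β j = 0 := congrFun hker i
    simp only [mulVec, dotProduct, submatrix_apply, id, Pi.smul_apply, col_apply, smul_eq_mul]
    rw [Finset.sum_coe_sort S (fun j => M i j * β j), Finset.sum_erase_eq_sub (by simpa),
      Finset.sum_filter_of_ne (by simp_all), h0]
    ring
  rcases hTU.eq_zero_or_abs_eq_of_mulVec_eq hind hcomb ⟨f, by simp [S, hf, hfe]⟩ with h | h
  · exact absurd h hf
  · rw [h, abs_neg]

/-- If `β` is a nonzero integer vector in the kernel of a TU matrix `M` whose support
is a circuit of the column matroid of `M`, then all nonzero coordinates of `β` have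
the same absolute value. -/
theorem stmt2 {r m : ℕ} (M : Matrix (Fin r) (Fin m) ℤ) (hTU : IsTU M)
    (β : Fin m → ℤ) (hβ : β ≠ 0) (hker : M.mulVec β = 0)
    (hC : IsCircuit M {e | β e ≠ 0}) :
    ∀ e f : Fin m, β e ≠ 0 → β f ≠ 0 → |β e| = |β f| :=
  stmt2_general M hTU β hker hC
end

section
/- Let M be a totally unimodular matrix representing a regular matroid, with Λ = ker(M) ∩ ℤ^E. Every β ∈ Λ admits a consistent decomposition: a finite multiset 𝒜 of simple flows such that β = Σ_{α∈𝒜} α, supp(α) ⊆ supp(β) for all α ∈ 𝒜, and α(e)β(e) ≥ 0 for all α ∈ 𝒜 and e ∈ E. -/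
/-!
A circuit `C` of a totally unimodular matrix carries a kernel vector with entries in `{-1, 0, 1}`:
for `e ∈ C` the other columns of `C` are independent, so some of their rows form a nonsingular
square submatrix `B`, and Cramer's rule writes the coefficients expressing column `e` through them
as minors divided by `det B = ±1`.

Given a nonzero integer flow `β`, take such a simple flow `α` supported inside `supp β`. If neither
`α` nor `-α` is conformal to `β`, then `β + t • α`, with `t` the least `|β e|` over the edges where
`α` and `β` have opposite signs, is a nonzero flow conformal to `β` with smaller support; induction
gives a simple flow conformal to `β`. Subtracting it keeps the rest conformal to `β` and lowers
`∑ |β e|`, so iterating yields the decomposition.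
-/

open Function Matrix

namespace Matrix

variable {m n K : Type*} [Field K]

theorem mulVec_eq_submatrix_mulVec_of_support_subset [Fintype n] (A : Matrix m n K) {S : Finset n}
    {x : n → K} (hx : support x ⊆ S) : A *ᵥ x = A.submatrix id ((↑) : S → n) *ᵥ (x ∘ (↑)) := by
  ext i
  simp only [mulVec, dotProduct, submatrix_apply, id, Function.comp_apply]
  rw [Finset.sum_coe_sort S (fun j => A i j * x j)]
  refine (Finset.sum_subset (Finset.subset_univ S) fun j _ hj => ?_).symm
  rw [notMem_support.1 fun h => hj (hx h), mul_zero]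

theorem not_linearIndepOn_col_iff [Fintype n] {A : Matrix m n K} {S : Set n} :
    ¬ LinearIndepOn K A.col S ↔ ∃ x : n → K, x ≠ 0 ∧ support x ⊆ S ∧ A *ᵥ x = 0 := by
  classical
  rw [linearDepOn_iff']
  constructor
  · rintro ⟨l, hlS, hl, hl0⟩
    refine ⟨l, fun h => hl0 (Finsupp.ext (congrFun h)), fun j hj => hlS (by simpa using hj), ?_⟩
    rw [← hl, Finsupp.linearCombination_apply, Finsupp.sum_fintype _ _ (by simp)]
    ext i
    simp [mulVec, dotProduct, Finset.sum_apply, mul_comm]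
  · rintro ⟨x, hx0, hxS, hx⟩
    refine ⟨Finsupp.equivFunOnFinite.symm x, fun j hj => hxS (by simpa using hj), ?_,
      fun h => hx0 (funext fun j => by simpa using DFunLike.congr_fun h j)⟩
    rw [Finsupp.linearCombination_apply, Finsupp.sum_fintype _ _ (by simp), ← hx]
    ext i
    simp [mulVec, dotProduct, Finset.sum_apply, mul_comm]

theorem exists_det_submatrix_ne_zero_of_linearIndependent_col [Fintype m] {ι : Type*} [Fintype ι]
    [DecidableEq ι] {A : Matrix m ι K} (h : LinearIndependent K A.col) :
    ∃ f : ι → m, (A.submatrix f id).det ≠ 0 := by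
  obtain ⟨κ, a, ha, hspan, hli⟩ := exists_linearIndependent' K A.row
  have : Fintype κ := Fintype.ofInjective a ha
  have hrows : LinearIndependent K Aᵀ.row := h
  have hcard : Fintype.card ι = Fintype.card κ := by
    rw [← hrows.rank_matrix, rank_transpose,
      rank_eq_finrank_span_row, ← hspan, linearIndependent_iff_card_eq_finrank_span.1 hli, Set.finrank]
  obtain e := Fintype.equivOfCardEq hcard
  refine ⟨a ∘ e, ?_⟩
  rw [← isUnit_iff_ne_zero, ← isUnit_iff_isUnit_det, ← linearIndependent_rows_iff_isUnit]
  exact hli.comp e e.injective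

theorem IsTotallyUnimodular.mem_range_signType_cast_of_mulVec_eq_col [Fintype m] [Fintype n]
    [DecidableEq n] {A : Matrix m n K} (hA : A.IsTotallyUnimodular) {S : Finset n}
    (hS : LinearIndepOn K A.col S) {x : n → K} (hxS : support x ⊆ S) {e : n}
    (hx : A *ᵥ x = A.col e) (j : n) : x j ∈ Set.range SignType.cast := by
  by_cases hj : j ∈ S
  swap
  · exact ⟨0, by simp [notMem_support.1 fun h => hj (hxS h)]⟩
  let g : S → n := (↑)
  obtain ⟨f, hf⟩ :=
    exists_det_submatrix_ne_zero_of_linearIndependent_col (A := A.submatrix id g) hS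
  let B := A.submatrix f g
  change B.det ≠ 0 at hf
  have hBx : B *ᵥ (x ∘ g) = fun p => A (f p) e := by
    ext p
    rw [mulVec_eq_submatrix_mulVec_of_support_subset A hxS] at hx
    exact congrFun hx (f p)
  have hcramer : B.det • (x ∘ g) = cramer B (B *ᵥ (x ∘ g)) := by
    rw [cramer_eq_adjugate_mulVec, mulVec_mulVec, adjugate_mul, smul_mulVec, one_mulVec]
  have hcol : B.updateCol ⟨j, hj⟩ (fun p => A (f p) e) = A.submatrix f (update g ⟨j, hj⟩ e) := by
    ext p q
    by_cases hq : q = ⟨j, hj⟩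
    · subst hq; simp
    · simp [hq, B]
  have hTU := A.isTotallyUnimodular_iff_fintype.1 hA
  obtain ⟨s, hs⟩ : B.det ∈ Set.range SignType.cast := hTU S f g
  obtain ⟨t, ht⟩ := hTU S f (update g ⟨j, hj⟩ e)
  have hxj := congrFun hcramer ⟨j, hj⟩
  rw [hBx, cramer_apply, hcol, ← ht] at hxj
  change B.det * x j = t at hxj
  rw [← hs] at hxj hf
  refine ⟨s * t, ?_⟩
  rw [SignType.coe_mul, ← hxj]
  cases s <;> simp at hf ⊢

theorem IsTotallyUnimodular.div_mem_range_signType_cast [Fintype m] [Fintype n]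
    {A : Matrix m n K} (hA : A.IsTotallyUnimodular) {x : n → K} (hx : A *ᵥ x = 0) {e : n}
    (hind : LinearIndepOn K A.col (support x \ {e})) (j : n) :
    x j / x e ∈ Set.range SignType.cast := by
  classical
  by_cases he : x e = 0
  · exact ⟨0, by simp [he]⟩
  by_cases hje : j = e
  · exact ⟨1, by simp [hje, he]⟩
  let y := -(x e)⁻¹ • update x e 0
  have hsplit : update x e 0 + Pi.single e (x e) = x := by
    ext k
    by_cases hk : k = e <;> simp [hk]
  have hy : A *ᵥ y = A.col e := by
    rw [← hsplit, mulVec_add, mulVec_single, add_eq_zero_iff_eq_neg] at hx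
    ext i
    simp [y, neg_smul, mulVec_neg, mulVec_smul, hx, he]
  have hyS : support y ⊆ ↑(support x \ {e}).toFinset := by
    intro k hk
    by_cases hke : k = e <;> simp_all [y]
  obtain ⟨s, hs⟩ :=
    hA.mem_range_signType_cast_of_mulVec_eq_col (by simpa using hind) hyS hy j
  exact ⟨-s, by simp [hs, y, hje, div_eq_inv_mul]⟩

theorem IsTotallyUnimodular.exists_signType_mulVec_eq_zero [Fintype m] [Fintype n]
    {A : Matrix m n K} (hA : A.IsTotallyUnimodular) {C : Set n}
    (hC : Minimal (fun S => ¬ LinearIndepOn K A.col S) C) :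
    ∃ σ : n → SignType, support σ = C ∧ A *ᵥ (fun j => (σ j : K)) = 0 := by
  obtain ⟨x, hx0, hxC, hx⟩ := not_linearIndepOn_col_iff.1 hC.prop
  have hsupp : support x = C := by
    by_contra hne
    exact hC.not_prop_of_ssubset (hxC.ssubset_of_ne hne)
      (not_linearIndepOn_col_iff.2 ⟨x, hx0, subset_rfl, hx⟩)
  obtain ⟨e, he⟩ := Function.ne_iff.1 hx0
  have hind : LinearIndepOn K A.col (support x \ {e}) :=
    not_not.1 <| hC.not_prop_of_ssubset <| hsupp ▸ Set.sdiff_singleton_ssubset.2 he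
  choose σ hσ using hA.div_mem_range_signType_cast hx hind
  have hσx : (fun j => (σ j : K)) = (x e)⁻¹ • x := funext fun j => by simp [hσ, div_eq_inv_mul]
  refine ⟨σ, ?_, by rw [hσx, mulVec_smul, hx, smul_zero]⟩
  ext j
  rw [← hsupp, mem_support, mem_support, ← (div_ne_zero_iff.trans (and_iff_left he)), ← hσ j]
  cases σ j <;> simp

end Matrix

section Conformal

variable {ι R : Type*}

def IsConformal [Zero R] [Preorder R] (α β : ι → R) : Prop :=
  ∀ e, (0 < α e → 0 < β e) ∧ (α e < 0 → β e < 0)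

theorem IsConformal.trans [Zero R] [Preorder R] {α β γ : ι → R} (hαβ : IsConformal α β)
    (hβγ : IsConformal β γ) : IsConformal α γ :=
  fun e => ⟨fun h => (hβγ e).1 ((hαβ e).1 h), fun h => (hβγ e).2 ((hαβ e).2 h)⟩

theorem IsConformal.support_subset [Zero R] [LinearOrder R] {α β : ι → R}
    (h : IsConformal α β) : support α ⊆ support β := by
  intro e he
  rcases (mem_support.1 he).lt_or_gt with hneg | hpos
  · exact ((h e).2 hneg).ne
  · exact ((h e).1 hpos).ne'

theorem IsConformal.mul_nonneg [Ring R] [LinearOrder R] [IsStrictOrderedRing R] {α β : ι → R}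
    (h : IsConformal α β) (e : ι) : 0 ≤ α e * β e := by
  rcases lt_trichotomy (α e) 0 with hneg | hzero | hpos
  · exact mul_nonneg_of_nonpos_of_nonpos hneg.le ((h e).2 hneg).le
  · simp [hzero]
  · exact _root_.mul_nonneg hpos.le ((h e).1 hpos).le

theorem IsConformal.isConformal_sub {α β : ι → ℤ} (h : IsConformal α β)
    (hα : ∀ e, α e = -1 ∨ α e = 0 ∨ α e = 1) : IsConformal (β - α) β := by
  intro e
  have he := h e
  rcases hα e with h' | h' | h' <;> simp only [Pi.sub_apply] <;> omega

theorem IsConformal.sum_natAbs_sub_lt [Fintype ι] {α β : ι → ℤ} (h : IsConformal α β)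
    (hα : ∀ e, α e = -1 ∨ α e = 0 ∨ α e = 1) (hα0 : α ≠ 0) :
    ∑ e, (β e - α e).natAbs < ∑ e, (β e).natAbs := by
  obtain ⟨e₀, he₀⟩ := Function.ne_iff.1 hα0
  refine Finset.sum_lt_sum (fun e _ => ?_) ⟨e₀, Finset.mem_univ _, ?_⟩
  · have he := h e
    rcases hα e with h' | h' | h' <;> omega
  · have he₀' := h e₀
    simp only [Pi.zero_apply] at he₀
    rcases hα e₀ with h' | h' | h' <;> omega

theorem exists_isConformal_add_smul_support_ssubset [Fintype ι] {α β : ι → ℤ}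
    (hα : ∀ e, α e = -1 ∨ α e = 0 ∨ α e = 1) (hαβ : support α ⊆ support β)
    (h₁ : ¬ IsConformal α β) (h₂ : ¬ IsConformal (-α) β) :
    ∃ t : ℤ, β + t • α ≠ 0 ∧ IsConformal (β + t • α) β ∧ support (β + t • α) ⊂ support β := by
  have hβ : ∀ e, α e ≠ 0 → β e ≠ 0 := fun e he => hαβ he
  obtain ⟨e₁, he₁⟩ : ∃ e, α e * β e < 0 := by
    obtain ⟨e, he⟩ := not_forall.1 h₁
    refine ⟨e, ?_⟩
    have hβe := hβ e
    rcases hα e with h | h | h <;> simp only [h] at * <;> omega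
  obtain ⟨e₀, he₀⟩ : ∃ e, 0 < α e * β e := by
    obtain ⟨e, he⟩ := not_forall.1 h₂
    refine ⟨e, ?_⟩
    have hβe := hβ e
    rcases hα e with h | h | h <;> simp only [Pi.neg_apply, h] at * <;> omega
  obtain ⟨e', he', hmin⟩ := (Finset.univ.filter fun e => α e * β e < 0).exists_min_image
    (fun e => (β e).natAbs) ⟨e₁, by simpa using he₁⟩
  simp only [Finset.mem_filter, Finset.mem_univ, true_and] at he' hmin
  have hconf : IsConformal (β + ((β e').natAbs : ℤ) • α) β := by
    intro e
    have hβe := hβ e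
    have hmine := hmin e
    simp only [Pi.add_apply, Pi.smul_apply, smul_eq_mul]
    rcases hα e with h | h | h <;> simp only [h] at * <;> omega
  refine ⟨(β e').natAbs, fun h => ?_, hconf, ?_⟩
  · have hβ'e₀ := congrFun h e₀
    simp only [Pi.add_apply, Pi.smul_apply, smul_eq_mul, Pi.zero_apply] at hβ'e₀
    rcases hα e₀ with h | h | h <;> simp only [h] at * <;> omega
  · refine (Set.ssubset_iff_of_subset hconf.support_subset).2 ⟨e', ?_, ?_⟩
    · exact right_ne_zero_of_mul he'.ne
    · simp only [mem_support, Pi.add_apply, Pi.smul_apply, smul_eq_mul, not_not]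
      rcases hα e' with h | h | h <;> simp only [h] at * <;> omega

end Conformal

theorem colDep_iff {m n : Type*} [Fintype m] {M : Matrix m n ℤ} {C : Set n} :
    ColDep M C ↔ ¬ LinearIndepOn ℚ (M.map (Int.cast : ℤ → ℚ)).col C :=
  Iff.rfl

section Flows

variable {m n : Type*} [Fintype m] [Fintype n] {M : Matrix m n ℤ}

theorem IsTU.isTotallyUnimodular_map (hM : IsTU M) (R : Type*) [CommRing R] :
    (M.map (Int.cast : ℤ → R)).IsTotallyUnimodular := by
  classical
  refine (isTotallyUnimodular_iff _).2 fun k f g => ?_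
  rw [submatrix_map, ← Int.cast_det]
  rcases hM k f g with h | h | h <;> rw [h]
  exacts [⟨-1, by simp⟩, ⟨0, by simp⟩, ⟨1, by simp⟩]

theorem IsSimpleFlow.neg {α : n → ℤ} (h : IsSimpleFlow M α) : IsSimpleFlow M (-α) := by
  obtain ⟨h0, hker, hent, hcirc⟩ := h
  refine ⟨neg_ne_zero.2 h0, by rw [mulVec_neg, hker, neg_zero], fun e => ?_, ?_⟩
  · rcases hent e with h | h | h <;> simp [h]
  · simpa using hcirc

theorem IsTU.exists_isSimpleFlow_support_subset (hM : IsTU M) {β : n → ℤ} (hβ0 : β ≠ 0)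
    (hβ : M *ᵥ β = 0) : ∃ α, IsSimpleFlow M α ∧ support α ⊆ support β := by
  have hcast (v : n → ℤ) :
      M.map (Int.cast : ℤ → ℚ) *ᵥ (fun j => (v j : ℚ)) = fun i => ((M *ᵥ v) i : ℚ) :=
    funext fun i => ((Int.castRingHom ℚ).map_mulVec M v i).symm
  have hdep : ColDep M (support β) := by
    refine colDep_iff.2 <| not_linearIndepOn_col_iff.2 ⟨fun j => β j, fun h => hβ0 ?_, ?_, ?_⟩
    · ext j; simpa using congrFun h j
    · intro j hj; simpa using hj
    · rw [hcast, hβ]; rfl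
  obtain ⟨C, hCβ, hC⟩ := exists_minimal_le_of_wellFoundedLT (ColDep M) _ hdep
  obtain ⟨σ, hσC, hσ⟩ := (hM.isTotallyUnimodular_map ℚ).exists_signType_mulVec_eq_zero hC
  have hsupp : support (fun j => (σ j : ℤ)) = C := by
    rw [← hσC]; ext j; simp only [mem_support]; cases σ j <;> simp
  refine ⟨fun j => σ j, ⟨?_, ?_, fun e => ?_, ?_⟩, hsupp ▸ hCβ⟩
  · intro h
    have hC0 := hC.prop
    rw [← hsupp, h, support_zero, colDep_iff] at hC0
    exact hC0 (linearIndepOn_empty _ _)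
  · ext i
    have hi := congrFun (hcast fun j => σ j) i
    simp only [SignType.intCast_cast, hσ, Pi.zero_apply] at hi
    exact_mod_cast hi.symm
  · beta_reduce; cases σ e <;> simp
  · show IsCircuit M (support _)
    rw [hsupp]
    exact Set.minimal_iff_forall_ssubset.1 hC

theorem IsTU.exists_isSimpleFlow_isConformal (hM : IsTU M) {β : n → ℤ} (hβ0 : β ≠ 0)
    (hβ : M *ᵥ β = 0) : ∃ α, IsSimpleFlow M α ∧ IsConformal α β := by
  induction hk : (support β).ncard using Nat.strong_induction_on generalizing β with
  | _ k ih =>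
  obtain ⟨α, hα, hαβ⟩ := hM.exists_isSimpleFlow_support_subset hβ0 hβ
  by_cases h₁ : IsConformal α β
  · exact ⟨α, hα, h₁⟩
  by_cases h₂ : IsConformal (-α) β
  · exact ⟨-α, hα.neg, h₂⟩
  obtain ⟨t, hne, hconf, hlt⟩ := exists_isConformal_add_smul_support_ssubset hα.2.2.1 hαβ h₁ h₂
  obtain ⟨γ, hγ, hγβ⟩ := ih _ (hk ▸ Set.ncard_lt_ncard hlt) hne
    (by rw [mulVec_add, mulVec_smul, hβ, hα.2.1, smul_zero, add_zero]) rfl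
  exact ⟨γ, hγ, hγβ.trans hconf⟩

theorem IsTU.exists_multiset_isSimpleFlow_sum_eq (hM : IsTU M) {β : n → ℤ}
    (hβ : M *ᵥ β = 0) :
    ∃ 𝒜 : Multiset (n → ℤ), (∀ α ∈ 𝒜, IsSimpleFlow M α ∧ IsConformal α β) ∧ 𝒜.sum = β := by
  induction hk : ∑ e, (β e).natAbs using Nat.strong_induction_on generalizing β with
  | _ k ih =>
  by_cases hβ0 : β = 0
  · exact ⟨0, by simp, by simp [hβ0]⟩
  obtain ⟨α, hα, hαβ⟩ := hM.exists_isSimpleFlow_isConformal hβ0 hβ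
  obtain ⟨𝒜, h𝒜, hsum⟩ := ih _ (hk ▸ hαβ.sum_natAbs_sub_lt hα.2.2.1 hα.1) (β := β - α)
    (by rw [mulVec_sub, hβ, hα.2.1, sub_zero]) rfl
  refine ⟨α ::ₘ 𝒜, fun γ hγ => ?_, by rw [Multiset.sum_cons, hsum, add_sub_cancel]⟩
  rcases Multiset.mem_cons.1 hγ with rfl | hγ
  · exact ⟨hα, hαβ⟩
  · exact ⟨(h𝒜 γ hγ).1, (h𝒜 γ hγ).2.trans (hαβ.isConformal_sub hα.2.2.1)⟩

end Flows

/-- Every integer flow of a TU matrix `M` admits a consistent decomposition into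
simple flows. -/
theorem stmt7 {r m : ℕ} (M : Matrix (Fin r) (Fin m) ℤ) (hTU : IsTU M)
    (β : Fin m → ℤ) (hker : M.mulVec β = 0) :
    ∃ 𝒜 : Multiset (Fin m → ℤ),
      (∀ α ∈ 𝒜, IsSimpleFlow M α ∧ {e | α e ≠ 0} ⊆ {e | β e ≠ 0} ∧
        ∀ e, 0 ≤ α e * β e) ∧
      𝒜.sum = β := by
  obtain ⟨𝒜, h𝒜, hsum⟩ := hTU.exists_multiset_isSimpleFlow_sum_eq hker
  exact ⟨𝒜, fun α hα => ⟨(h𝒜 α hα).1, (h𝒜 α hα).2.support_subset, (h𝒜 α hα).2.mul_nonneg⟩,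
    hsum⟩
end

section
/- Let U be a totally unimodular E-by-s matrix with columns β_1,...,β_s, and let C_i = supp(β_i). If e and f both lie in C_i ∩ C_j, then β_i(e)β_j(e) = β_i(f)β_j(f). Consequently |C_i ∩ C_j| = |⟨β_i, β_j⟩|. -/
/-!
A `1 × 1` minor shows that every nonzero entry of `U` is a unit `±1`. For rows `e, f` in
`C_i ∩ C_j`, the `2 × 2` minor on rows `e, f` and columns `i, j` is a difference of two units,
hence lies in `{-2, 0, 2}`; total unimodularity forces it to vanish, which (multiplying by the
unit `U e j * U f j`) says `U e i * U e j = U f i * U f j`. So on `C_i ∩ C_j` the product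
`β_i β_j` is a constant unit and `⟨β_i, β_j⟩ = ±|C_i ∩ C_j|`.
-/

namespace IsTU

variable {m n : Type*} [Fintype m] [Fintype n] {M : Matrix m n ℤ}

theorem isUnit_of_ne_zero (hM : IsTU M) {e : m} {i : n} (h : M e i ≠ 0) : IsUnit (M e i) := by
  have h1 := hM 1 ![e] ![i]
  simp only [Matrix.det_fin_one, Matrix.submatrix_apply, Matrix.cons_val_fin_one,
    Set.mem_insert_iff, Set.mem_singleton_iff] at h1
  rcases h1 with h1 | h1 | h1
  · exact h1 ▸ isUnit_one.neg
  · exact absurd h1 h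
  · exact h1 ▸ isUnit_one

theorem mul_eq_mul_of_ne_zero (hM : IsTU M) {e f : m} {i j : n}
    (hei : M e i ≠ 0) (hej : M e j ≠ 0) (hfi : M f i ≠ 0) (hfj : M f j ≠ 0) :
    M e i * M f j = M e j * M f i := by
  have hdet := hM 2 ![e, f] ![i, j]
  simp only [Matrix.det_fin_two, Matrix.submatrix_apply, Matrix.cons_val_zero,
    Matrix.cons_val_one, Set.mem_insert_iff, Set.mem_singleton_iff] at hdet
  rcases Int.isUnit_iff.mp (hM.isUnit_of_ne_zero hei) with h₁ | h₁ <;>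
  rcases Int.isUnit_iff.mp (hM.isUnit_of_ne_zero hej) with h₂ | h₂ <;>
  rcases Int.isUnit_iff.mp (hM.isUnit_of_ne_zero hfi) with h₃ | h₃ <;>
  rcases Int.isUnit_iff.mp (hM.isUnit_of_ne_zero hfj) with h₄ | h₄ <;>
  simp only [h₁, h₂, h₃, h₄] at hdet ⊢ <;> omega

theorem mul_col_eq_mul_col_of_ne_zero (hM : IsTU M) {e f : m} {i j : n}
    (hei : M e i ≠ 0) (hej : M e j ≠ 0) (hfi : M f i ≠ 0) (hfj : M f j ≠ 0) :
    M e i * M e j = M f i * M f j := by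
  have hsq : ∀ {x : m} {k : n}, M x k ≠ 0 → M x k * M x k = 1 := fun h =>
    Int.isUnit_mul_self (hM.isUnit_of_ne_zero h)
  calc M e i * M e j = M e i * M e j * (M f j * M f j) := by rw [hsq hfj, mul_one]
    _ = M e i * M f j * (M e j * M f j) := by ring
    _ = M e j * M f i * (M e j * M f j) := by rw [hM.mul_eq_mul_of_ne_zero hei hej hfi hfj]
    _ = M e j * M e j * (M f i * M f j) := by ring
    _ = M f i * M f j := by rw [hsq hej, one_mul]

end IsTU

theorem Finset.natAbs_sum_eq_card_filter_ne_zero {ι : Type*} (s : Finset ι) (w : ι → ℤ)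
    (hconst : ∀ x ∈ s, ∀ y ∈ s, w x ≠ 0 → w y ≠ 0 → w x = w y)
    (hunit : ∀ x ∈ s, w x ≠ 0 → IsUnit (w x)) :
    (∑ x ∈ s, w x).natAbs = (s.filter fun x => w x ≠ 0).card := by
  rw [← Finset.sum_filter_ne_zero]
  rcases (s.filter fun x => w x ≠ 0).eq_empty_or_nonempty with hempty | ⟨x₀, hx₀⟩
  · simp [hempty]
  obtain ⟨hx₀s, hx₀⟩ := Finset.mem_filter.mp hx₀
  have hconst' : ∀ x ∈ s.filter fun x => w x ≠ 0, w x = w x₀ := fun x hx =>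
    hconst x (Finset.mem_filter.mp hx).1 x₀ hx₀s (Finset.mem_filter.mp hx).2 hx₀
  rw [Finset.sum_congr rfl hconst', Finset.sum_const, nsmul_eq_mul, Int.natAbs_mul,
    Int.isUnit_iff_natAbs_eq.mp (hunit x₀ hx₀s hx₀), mul_one, Int.natAbs_natCast]

theorem stmt11_general {E : Type*} [Fintype E] {s : ℕ}
    (U : Matrix E (Fin s) ℤ) (hTU : IsTU U) (i j : Fin s) :
    (∀ e f : E, U e i ≠ 0 → U e j ≠ 0 → U f i ≠ 0 → U f j ≠ 0 →
      U e i * U e j = U f i * U f j) ∧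
    (Finset.univ.filter fun e => U e i ≠ 0 ∧ U e j ≠ 0).card
      = (∑ e, U e i * U e j).natAbs := by
  have hconst : ∀ e f : E, U e i ≠ 0 → U e j ≠ 0 → U f i ≠ 0 → U f j ≠ 0 →
      U e i * U e j = U f i * U f j := fun _ _ => hTU.mul_col_eq_mul_col_of_ne_zero
  refine ⟨hconst, ?_⟩
  simp_rw [← mul_ne_zero_iff]
  refine (Finset.natAbs_sum_eq_card_filter_ne_zero _ _ ?_ ?_).symm
  · intro e _ f _ he hf
    exact hconst e f (left_ne_zero_of_mul he) (right_ne_zero_of_mul he)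
      (left_ne_zero_of_mul hf) (right_ne_zero_of_mul hf)
  · intro e _ he
    exact (hTU.isUnit_of_ne_zero (left_ne_zero_of_mul he)).mul
      (hTU.isUnit_of_ne_zero (right_ne_zero_of_mul he))

/-- For a TU matrix `U` with columns `β_i` and supports `C_i`: on `C_i ∩ C_j` the
product `β_i(e)β_j(e)` is constant, and consequently `|C_i ∩ C_j| = |⟨β_i, β_j⟩|`. -/
theorem stmt11 {E : Type*} [Fintype E] [DecidableEq E] {s : ℕ}
    (U : Matrix E (Fin s) ℤ) (hTU : IsTU U) (i j : Fin s) :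
    (∀ e f : E, U e i ≠ 0 → U e j ≠ 0 → U f i ≠ 0 → U f j ≠ 0 →
      U e i * U e j = U f i * U f j) ∧
    (Finset.univ.filter fun e => U e i ≠ 0 ∧ U e j ≠ 0).card
      = (∑ e, U e i * U e j).natAbs :=
  stmt11_general U hTU i j
end

section
/- Let U be a totally unimodular E-by-s matrix with columns β_1,...,β_s, A = UᵀU, and C_i = supp(β_i). For every nonempty S ⊆ [s], f_A(S) = |∩_{i∈S} C_i|, where f_A(S) = a_{ii} if S = {i}, f_A(S) = 0 if S contains a triple {h,i,j} with a_{hi}a_{ij}a_{jh} ≤ 0, and otherwise f_A(S) = min{|a_{ij}| : {i,j} ⊆ S, i ≠ j} when |S| ≥ 2. -/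
/-!
Write `Cᵢ = colSupport U i`. Total unimodularity makes the Gram matrix rigid. The 1×1 minors
force every entry of `U` to be `0` or `±1`, and the 2×2 minors force the product `U e i * U e j`
to be the same sign `σᵢⱼ` for all rows `e ∈ Cᵢ ∩ Cⱼ`, so `aᵢⱼ = σᵢⱼ |Cᵢ ∩ Cⱼ|`. A row in
`Cₕ ∩ Cᵢ ∩ Cⱼ` shows that the cyclic product `σₕᵢ σᵢⱼ σⱼₕ` is a product of squares, so nonpositive
triples have empty common support.
Conversely, if none of `Cᵢ ∩ Cⱼ ⊆ Cₗ`, `Cⱼ ∩ Cₗ ⊆ Cᵢ`, `Cₗ ∩ Cᵢ ⊆ Cⱼ` holds, three witness rows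
give a 3×3 minor with exactly two nonzero diagonals, and it lies in `{-1, 0, 1}` only if the
cyclic sign product is `-1`. Hence for positive triples, adding a column to `S` never shrinks
`⋂_{i ∈ S} Cᵢ` below some pairwise intersection, and induction on `|S|` finishes.
-/

open Finset Matrix

def colSupport {m n R : Type*} [Fintype m] [Zero R] [DecidableEq R] (U : Matrix m n R) (i : n) :
    Finset m :=
  {e | U e i ≠ 0}

@[simp]
theorem mem_colSupport {m n R : Type*} [Fintype m] [Zero R] [DecidableEq R] {U : Matrix m n R}
    {i : n} {e : m} : e ∈ colSupport U i ↔ U e i ≠ 0 := by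
  simp [colSupport]

theorem transpose_mul_self_apply_eq_sum {m n R : Type*} [Fintype m] [DecidableEq m]
    [NonUnitalNonAssocSemiring R] [DecidableEq R] (U : Matrix m n R) (i j : n) :
    (Uᵀ * U) i j = ∑ e ∈ colSupport U i ∩ colSupport U j, U e i * U e j := by
  rw [mul_apply]
  refine (sum_subset (subset_univ _) fun e _ he => ?_).symm
  by_cases hi : U e i = 0
  · simp [hi]
  · simp_all

namespace IsTU

variable {m n : Type*} [Fintype m] [Fintype n] {U : Matrix m n ℤ}

theorem entry_eq_one_or_neg_one (hU : IsTU U) {e : m} {i : n} (h : U e i ≠ 0) :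
    U e i = 1 ∨ U e i = -1 := by
  have h1 := hU 1 ![e] ![i]
  simp only [det_fin_one, submatrix_apply, Matrix.cons_val_zero, Set.mem_insert_iff,
    Set.mem_singleton_iff] at h1
  omega

theorem abs_entry_mul_entry (hU : IsTU U) {e : m} {i j : n} (hi : U e i ≠ 0) (hj : U e j ≠ 0) :
    |U e i * U e j| = 1 := by
  rcases hU.entry_eq_one_or_neg_one hi with a | a <;>
    rcases hU.entry_eq_one_or_neg_one hj with b | b <;> simp [a, b]

theorem entry_mul_entry_eq (hU : IsTU U) {e f : m} {i j : n}
    (hei : U e i ≠ 0) (hej : U e j ≠ 0) (hfi : U f i ≠ 0) (hfj : U f j ≠ 0) :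
    U e i * U e j = U f i * U f j := by
  have h2 := hU 2 ![e, f] ![i, j]
  simp only [det_fin_two, submatrix_apply, Matrix.cons_val_zero, Matrix.cons_val_one,
    Set.mem_insert_iff, Set.mem_singleton_iff] at h2
  rcases hU.entry_eq_one_or_neg_one hei with a | a <;>
    rcases hU.entry_eq_one_or_neg_one hej with b | b <;>
    rcases hU.entry_eq_one_or_neg_one hfi with c | c <;>
    rcases hU.entry_eq_one_or_neg_one hfj with d | d <;>
    rw [a, b, c, d] at h2 ⊢ <;> omega

/-- The 3×3 minor on rows `e, f, g` and columns `i, j, l` is the sum of its two nonzero diagonal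
products, each `±1`; lying in `{-1, 0, 1}`, it must vanish. -/
theorem entry_cycle_eq_neg_one (hU : IsTU U) {e f g : m} {i j l : n}
    (hei : U e i ≠ 0) (hej : U e j ≠ 0) (hel : U e l = 0)
    (hfi : U f i = 0) (hfj : U f j ≠ 0) (hfl : U f l ≠ 0)
    (hgi : U g i ≠ 0) (hgj : U g j = 0) (hgl : U g l ≠ 0) :
    U e i * U e j * (U f j * U f l) * (U g l * U g i) = -1 := by
  have h3 := hU 3 ![e, f, g] ![i, j, l]
  simp only [det_fin_three, submatrix_apply, Matrix.cons_val_zero, Matrix.cons_val_one,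
    Matrix.cons_val_two, Matrix.tail_cons, Matrix.head_cons, Set.mem_insert_iff,
    Set.mem_singleton_iff, hel, hfi, hgj] at h3
  rcases hU.entry_eq_one_or_neg_one hei with a | a <;>
    rcases hU.entry_eq_one_or_neg_one hej with b | b <;>
    rcases hU.entry_eq_one_or_neg_one hfj with c | c <;>
    rcases hU.entry_eq_one_or_neg_one hfl with d | d <;>
    rcases hU.entry_eq_one_or_neg_one hgi with x | x <;>
    rcases hU.entry_eq_one_or_neg_one hgl with y | y <;>
    rw [a, b, c, d, x, y] at h3 ⊢ <;> omega

variable [DecidableEq m]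

theorem transpose_mul_self_apply (hU : IsTU U) {i j : n} {e : m}
    (he : e ∈ colSupport U i ∩ colSupport U j) :
    (Uᵀ * U) i j = U e i * U e j * #(colSupport U i ∩ colSupport U j) := by
  simp only [mem_inter, mem_colSupport] at he
  rw [transpose_mul_self_apply_eq_sum, sum_congr rfl fun f hf => ?_, sum_const, nsmul_eq_mul,
    mul_comm]
  simp only [mem_inter, mem_colSupport] at hf
  exact hU.entry_mul_entry_eq hf.1 hf.2 he.1 he.2

theorem abs_transpose_mul_self_apply (hU : IsTU U) (i j : n) :
    |(Uᵀ * U) i j| = #(colSupport U i ∩ colSupport U j) := by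
  rcases (colSupport U i ∩ colSupport U j).eq_empty_or_nonempty with h | ⟨e, he⟩
  · simp [transpose_mul_self_apply_eq_sum, h]
  · obtain ⟨hei, hej⟩ : U e i ≠ 0 ∧ U e j ≠ 0 := by simpa using he
    rw [hU.transpose_mul_self_apply he, abs_mul, hU.abs_entry_mul_entry hei hej, one_mul,
      Nat.abs_cast]

theorem transpose_mul_self_apply_self (hU : IsTU U) (i : n) :
    (Uᵀ * U) i i = #(colSupport U i) := by
  have hnonneg : 0 ≤ (Uᵀ * U) i i := by
    rw [transpose_mul_self_apply_eq_sum]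
    exact sum_nonneg fun e _ => mul_self_nonneg _
  rw [← abs_of_nonneg hnonneg, hU.abs_transpose_mul_self_apply, inter_self]

theorem transpose_mul_self_cycle (hU : IsTU U) {i j l : n} {e f g : m}
    (he : e ∈ colSupport U i ∩ colSupport U j) (hf : f ∈ colSupport U j ∩ colSupport U l)
    (hg : g ∈ colSupport U l ∩ colSupport U i) :
    (Uᵀ * U) i j * (Uᵀ * U) j l * (Uᵀ * U) l i =
      U e i * U e j * (U f j * U f l) * (U g l * U g i) *
        (#(colSupport U i ∩ colSupport U j) * #(colSupport U j ∩ colSupport U l) *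
          #(colSupport U l ∩ colSupport U i)) := by
  rw [hU.transpose_mul_self_apply he, hU.transpose_mul_self_apply hf,
    hU.transpose_mul_self_apply hg]
  ring

theorem transpose_mul_self_cycle_pos_iff (hU : IsTU U) {i j l : n} {e f g : m}
    (he : e ∈ colSupport U i ∩ colSupport U j) (hf : f ∈ colSupport U j ∩ colSupport U l)
    (hg : g ∈ colSupport U l ∩ colSupport U i) :
    0 < (Uᵀ * U) i j * (Uᵀ * U) j l * (Uᵀ * U) l i ↔
      0 < U e i * U e j * (U f j * U f l) * (U g l * U g i) := by
  rw [hU.transpose_mul_self_cycle he hf hg, mul_pos_iff_of_pos_right]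
  have := card_pos.2 ⟨e, he⟩
  have := card_pos.2 ⟨f, hf⟩
  have := card_pos.2 ⟨g, hg⟩
  positivity

theorem transpose_mul_self_cycle_pos (hU : IsTU U) {i j l : n} {e : m}
    (hi : U e i ≠ 0) (hj : U e j ≠ 0) (hl : U e l ≠ 0) :
    0 < (Uᵀ * U) i j * (Uᵀ * U) j l * (Uᵀ * U) l i := by
  rw [hU.transpose_mul_self_cycle_pos_iff (e := e) (f := e) (g := e) (by simp [hi, hj])
    (by simp [hj, hl]) (by simp [hl, hi])]
  have : U e i * U e j * (U e j * U e l) * (U e l * U e i) = (U e i * U e j * U e l) ^ 2 := by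
    ring
  rw [this]
  positivity

theorem inter_subset_of_transpose_mul_self_cycle_pos (hU : IsTU U) {i j l : n}
    (hpos : 0 < (Uᵀ * U) i j * (Uᵀ * U) j l * (Uᵀ * U) l i) :
    colSupport U i ∩ colSupport U j ⊆ colSupport U l ∨
      colSupport U j ∩ colSupport U l ⊆ colSupport U i ∨
      colSupport U l ∩ colSupport U i ⊆ colSupport U j := by
  by_contra h
  simp only [not_or, not_subset] at h
  obtain ⟨⟨e, he, hel⟩, ⟨f, hf, hfi⟩, ⟨g, hg, hgj⟩⟩ := h
  rw [hU.transpose_mul_self_cycle_pos_iff he hf hg] at hpos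
  simp only [mem_inter, mem_colSupport, not_not] at he hf hg hel hfi hgj
  rw [hU.entry_cycle_eq_neg_one he.1 he.2 hel hfi hf.1 hf.2 hg.2 hgj hg.1] at hpos
  omega

theorem exists_inf_colSupport_eq_inter [DecidableEq n] (hU : IsTU U) {S : Finset n} (hS : 2 ≤ #S)
    (hpos : ∀ h ∈ S, ∀ i ∈ S, ∀ j ∈ S, h ≠ i → i ≠ j → h ≠ j →
      0 < (Uᵀ * U) h i * (Uᵀ * U) i j * (Uᵀ * U) j h) :
    ∃ i ∈ S, ∃ j ∈ S, i ≠ j ∧ S.inf (colSupport U) = colSupport U i ∩ colSupport U j := by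
  induction S using Finset.induction_on with
  | empty => simp at hS
  | insert l S hl ih =>
    rw [card_insert_of_notMem hl] at hS
    rw [inf_insert, inf_eq_inter]
    by_cases hS' : 2 ≤ #S
    · obtain ⟨i, hi, j, hj, hij, hinf⟩ := ih hS' fun h hh i hi j hj =>
        hpos h (mem_insert_of_mem hh) i (mem_insert_of_mem hi) j (mem_insert_of_mem hj)
      have hil : i ≠ l := ne_of_mem_of_not_mem hi hl
      have hjl : j ≠ l := ne_of_mem_of_not_mem hj hl
      rw [hinf]
      rcases hU.inter_subset_of_transpose_mul_self_cycle_pos (hpos i (mem_insert_of_mem hi) j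
        (mem_insert_of_mem hj) l (mem_insert_self l S) hij hjl hil) with h | h | h
      · exact ⟨i, mem_insert_of_mem hi, j, mem_insert_of_mem hj, hij, inter_eq_right.2 h⟩
      · refine ⟨j, mem_insert_of_mem hj, l, mem_insert_self l S, hjl, ?_⟩
        rw [← inter_eq_right.2 h, inter_comm, inter_assoc]
      · refine ⟨l, mem_insert_self l S, i, mem_insert_of_mem hi, hil.symm, ?_⟩
        rw [← inter_eq_left.2 h, inter_assoc]
    · obtain ⟨a, rfl⟩ := card_eq_one.1 (show #S = 1 by omega)
      exact ⟨l, mem_insert_self l _, a, mem_insert_of_mem (mem_singleton_self a),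
        by simpa using hl, by rw [inf_singleton]⟩

end IsTU

theorem stmt13_general {E : Type*} [Fintype E] [DecidableEq E] {s : ℕ}
    (U : Matrix E (Fin s) ℤ) (hTU : IsTU U)
    (A : Matrix (Fin s) (Fin s) ℤ) (hA : A = U.transpose * U)
    (S : Finset (Fin s)) :
    (∀ i : Fin s, S = {i} →
      ((@Finset.filter E (fun e => ∀ k ∈ S, U e k ≠ 0) (fun _ => inferInstance) Finset.univ).card : ℤ) = A i i) ∧
    ((∃ h ∈ S, ∃ i ∈ S, ∃ j ∈ S, h ≠ i ∧ i ≠ j ∧ h ≠ j ∧ A h i * A i j * A j h ≤ 0) →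
      (@Finset.filter E (fun e => ∀ k ∈ S, U e k ≠ 0) (fun _ => inferInstance) Finset.univ).card = 0) ∧
    (2 ≤ S.card →
      (∀ h ∈ S, ∀ i ∈ S, ∀ j ∈ S, h ≠ i → i ≠ j → h ≠ j → 0 < A h i * A i j * A j h) →
      ∃ i ∈ S, ∃ j ∈ S, i ≠ j ∧
        ((@Finset.filter E (fun e => ∀ k ∈ S, U e k ≠ 0) (fun _ => inferInstance) Finset.univ).card : ℤ) = |A i j| ∧
        ∀ k ∈ S, ∀ l ∈ S, k ≠ l → |A i j| ≤ |A k l|) := by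
  subst hA
  have hinf : (@Finset.filter E (fun e => ∀ k ∈ S, U e k ≠ 0) (fun _ => inferInstance) univ) =
      S.inf (colSupport U) := by
    ext e
    simp [mem_inf]
  rw [hinf]
  refine ⟨?_, ?_, ?_⟩
  · rintro i rfl
    rw [inf_singleton, hTU.transpose_mul_self_apply_self]
  · rintro ⟨h, hh, i, hi, j, hj, -, -, -, hle⟩
    refine card_eq_zero.2 (eq_empty_of_forall_notMem fun e he => ?_)
    have he : ∀ k ∈ S, U e k ≠ 0 := by simpa [mem_inf] using he
    exact hle.not_gt (hTU.transpose_mul_self_cycle_pos (he h hh) (he i hi) (he j hj))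
  · intro hcard hpos
    obtain ⟨i, hi, j, hj, hij, hSij⟩ := hTU.exists_inf_colSupport_eq_inter hcard hpos
    refine ⟨i, hi, j, hj, hij, by rw [hSij, hTU.abs_transpose_mul_self_apply], ?_⟩
    intro k hk l hl _
    rw [hTU.abs_transpose_mul_self_apply, hTU.abs_transpose_mul_self_apply, ← hSij]
    exact_mod_cast card_le_card (subset_inter (inf_le hk) (inf_le hl))

/-- For a TU matrix `U` with Gram matrix `A = UᵀU` and column supports `C_i`:
for every nonempty `S`, `f_A(S) = |⋂_{i∈S} C_i|`, where `f_A({i}) = a_{ii}`,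
`f_A(S) = 0` if `S` contains a triple `{h,i,j}` with `a_{hi}a_{ij}a_{jh} ≤ 0`,
and otherwise `f_A(S) = min { |a_{ij}| : i ≠ j in S }` when `|S| ≥ 2`. -/
theorem stmt13 {E : Type*} [Fintype E] [DecidableEq E] {s : ℕ}
    (U : Matrix E (Fin s) ℤ) (hTU : IsTU U)
    (A : Matrix (Fin s) (Fin s) ℤ) (hA : A = U.transpose * U)
    (S : Finset (Fin s)) (hS : S.Nonempty) :
    (∀ i : Fin s, S = {i} →
      ((@Finset.filter E (fun e => ∀ k ∈ S, U e k ≠ 0) (fun _ => inferInstance) Finset.univ).card : ℤ) = A i i) ∧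
    ((∃ h ∈ S, ∃ i ∈ S, ∃ j ∈ S, h ≠ i ∧ i ≠ j ∧ h ≠ j ∧ A h i * A i j * A j h ≤ 0) →
      (@Finset.filter E (fun e => ∀ k ∈ S, U e k ≠ 0) (fun _ => inferInstance) Finset.univ).card = 0) ∧
    (2 ≤ S.card →
      (∀ h ∈ S, ∀ i ∈ S, ∀ j ∈ S, h ≠ i → i ≠ j → h ≠ j → 0 < A h i * A i j * A j h) →
      ∃ i ∈ S, ∃ j ∈ S, i ≠ j ∧
        ((@Finset.filter E (fun e => ∀ k ∈ S, U e k ≠ 0) (fun _ => inferInstance) Finset.univ).card : ℤ) = |A i j| ∧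
        ∀ k ∈ S, ∀ l ∈ S, k ≠ l → |A i j| ≤ |A k l|) :=
  stmt13_general U hTU A hA S
end

section
/- Let M be a TU matrix representing a regular matroid of rank r on an m-element ground set E, with s = m - r. If Q is an E-by-s integer matrix whose columns form a ℤ-basis of the lattice Λ = ker(M) ∩ ℤ^E, then Q is weakly unimodular: every s-by-s submatrix of Q has determinant in {-1,0,+1}. -/
open Matrix

theorem Function.Injective.exists_sumEquiv_comp_inl {α β γ : Type*} [Fintype α] [Fintype β]
    [Fintype γ] {f : α → γ} (hf : f.Injective)
    (hcard : Fintype.card α + Fintype.card β = Fintype.card γ) :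
    ∃ e : α ⊕ β ≃ γ, e ∘ Sum.inl = f := by
  classical
  have hcompl : Fintype.card ((Set.range f)ᶜ : Set γ) = Fintype.card β := by
    rw [Fintype.card_compl_set, Set.card_range_of_injective hf]
    omega
  exact ⟨(Equiv.sumCongr (Equiv.ofInjective f hf)
    (Fintype.equivOfCardEq hcompl).symm).trans (Equiv.Set.sumCompl _), rfl⟩

section Splitting

variable {R σ ρ ε : Type*} [Fintype σ] [Fintype ρ] [Fintype ε]

theorem Matrix.mulVec_comp_equiv_symm_sum [Semiring R] (M : Matrix ρ ε R) (e : σ ⊕ ρ ≃ ε)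
    (w : σ ⊕ ρ → R) :
    M *ᵥ (w ∘ e.symm) = M.submatrix id (e ∘ Sum.inl) *ᵥ (w ∘ Sum.inl)
      + M.submatrix id (e ∘ Sum.inr) *ᵥ (w ∘ Sum.inr) := by
  have hcols : M.submatrix id e = fromCols (M.submatrix id (e ∘ Sum.inl))
      (M.submatrix id (e ∘ Sum.inr)) := by
    ext i (j | j) <;> rfl
  rw [← fromCols_mulVec, ← hcols, submatrix_mulVec_equiv]
  rfl

variable [CommRing R] {M : Matrix ρ ε R} {Q : Matrix ε σ R} (e : σ ⊕ ρ ≃ ε)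

theorem det_submatrix_compl_ne_zero [IsDomain R] [DecidableEq σ] [DecidableEq ρ]
    (hΛ : ∀ β, M *ᵥ β = 0 → ∃ c, Q *ᵥ c = β)
    (hQ : (Q.submatrix (e ∘ Sum.inl) id).det ≠ 0) :
    (M.submatrix id (e ∘ Sum.inr)).det ≠ 0 := by
  intro hN
  obtain ⟨v, hv, hNv⟩ := exists_mulVec_eq_zero_iff.2 hN
  have hker : M *ᵥ (Sum.elim 0 v ∘ e.symm) = 0 := by
    simp [mulVec_comp_equiv_symm_sum, hNv]
  obtain ⟨c, hc⟩ := hΛ _ hker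
  have hQc : Q.submatrix (e ∘ Sum.inl) id *ᵥ c = 0 := by
    ext j
    exact (congrFun hc (e (Sum.inl j))).trans (by simp)
  have hc0 : c = 0 := by
    by_contra hc0
    exact hQ (exists_mulVec_eq_zero_iff.1 ⟨c, hc0, hQc⟩)
  apply hv
  ext j
  simpa [hc0] using (congrFun hc (e (Sum.inr j))).symm

theorem isUnit_det_submatrix_of_isUnit_det_compl [DecidableEq σ] [DecidableEq ρ]
    (hΛ : ∀ β, M *ᵥ β = 0 → ∃ c, Q *ᵥ c = β)
    (hN : IsUnit (M.submatrix id (e ∘ Sum.inr)).det) :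
    IsUnit (Q.submatrix (e ∘ Sum.inl) id).det := by
  rw [← isUnit_iff_isUnit_det, ← mulVec_surjective_iff_isUnit]
  intro u
  set N := M.submatrix id (e ∘ Sum.inr)
  set x := -(N⁻¹ *ᵥ (M.submatrix id (e ∘ Sum.inl) *ᵥ u))
  have hker : M *ᵥ (Sum.elim u x ∘ e.symm) = 0 := by
    rw [mulVec_comp_equiv_symm_sum]
    simp only [Sum.elim_comp_inl, Sum.elim_comp_inr, x, mulVec_neg, mulVec_mulVec,
      ← Matrix.mul_assoc, N, mul_nonsing_inv _ hN, Matrix.one_mul, add_neg_cancel]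
  obtain ⟨c, hc⟩ := hΛ _ hker
  exact ⟨c, funext fun j => (congrFun hc (e (Sum.inl j))).trans (by simp)⟩

end Splitting

theorem IsTU.isUnit_det_of_ne_zero {ρ ε : Type*} [Fintype ρ] [Fintype ε] {M : Matrix ρ ε ℤ}
    (hM : IsTU M) {k : ℕ} (g : Fin k → ρ) (h : Fin k → ε) (hne : (M.submatrix g h).det ≠ 0) :
    IsUnit (M.submatrix g h).det := by
  rcases hM k g h with h1 | h0 | h1
  · exact Int.isUnit_iff.2 (Or.inr h1)
  · exact absurd h0 hne
  · exact Int.isUnit_iff.2 (Or.inl h1)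

theorem stmt17_general {r m s : ℕ} (M : Matrix (Fin r) (Fin m) ℤ) (hTU : IsTU M)
    (hrank : (M.map (Int.cast : ℤ → ℚ)).rank = r) (hs : s = m - r)
    (Q : Matrix (Fin m) (Fin s) ℤ)
    (hbasis : ∀ β : Fin m → ℤ, M.mulVec β = 0 → ∃! c : Fin s → ℤ, Q.mulVec c = β) :
    ∀ f : Fin s → Fin m, (Q.submatrix f id).det ∈ ({-1, 0, 1} : Set ℤ) := by
  intro f
  by_cases hQ : (Q.submatrix f id).det = 0
  · exact Or.inr (Or.inl hQ)
  have hf : f.Injective := fun i j hij => by_contra fun hne =>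
    hQ (det_zero_of_row_eq hne (funext fun k => by simp [hij]))
  have hrm : r ≤ m := by
    simpa [hrank] using rank_le_card_width (M.map (Int.cast : ℤ → ℚ))
  obtain ⟨e, rfl⟩ := hf.exists_sumEquiv_comp_inl (β := Fin r) (by simp only [Fintype.card_fin]; omega)
  have hΛ β hβ := (hbasis β hβ).exists
  have hN := hTU.isUnit_det_of_ne_zero id (e ∘ Sum.inr) (det_submatrix_compl_ne_zero e hΛ hQ)
  rcases Int.isUnit_iff.1 (isUnit_det_submatrix_of_isUnit_det_compl e hΛ hN) with h | h
  · exact Or.inr (Or.inr h)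
  · exact Or.inl h

/-- If the columns of an integer matrix `Q` form a `ℤ`-basis of the lattice of integer
flows `ker M ∩ ℤ^E` of an `r×m` TU matrix `M` of rank `r` (with `s = m - r`), then `Q`
is weakly unimodular: every `s×s` submatrix has determinant in `{-1,0,1}`. -/
theorem stmt17 {r m s : ℕ} (M : Matrix (Fin r) (Fin m) ℤ) (hTU : IsTU M)
    (hrank : (M.map (Int.cast : ℤ → ℚ)).rank = r) (hs : s = m - r)
    (Q : Matrix (Fin m) (Fin s) ℤ)
    (hcols : ∀ j, M.mulVec (fun i => Q i j) = 0)
    (hbasis : ∀ β : Fin m → ℤ, M.mulVec β = 0 → ∃! c : Fin s → ℤ, Q.mulVec c = β) :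
    ∀ f : Fin s → Fin m, (Q.submatrix f id).det ∈ ({-1, 0, 1} : Set ℤ) :=
  stmt17_general M hTU hrank hs Q hbasis
end
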